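/- arXiv:2203.05403 — 2 statements merged into one kernel-verified Lean document; each statement's English description precedes it below -/
import Mathlib

section
/- Let F : ℝ^b × ℝ^a → ℝ^b be λ-stable with λ ∈ (0,1) and κ-Lipschitz in its input, let W_c be an m × b real matrix, b_c ∈ ℝ^m, and let σ : ℝ^m → ℝ^m be an L-Lipschitz map (with respect to Euclidean norms). For an input sequence x of length T define p(T;x) = σ(W_c·h(T;x) + b_c), where h(t;x) are the hidden states with zero initial state. Then for any two input sequences x and x̃ of length T, ‖p(T;x) − p(T;x̃)‖ ≤ (L·κ·‖W_c‖/(1 − λ))·‖x − x̃‖_ℓ∞. -/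
/-!
The difference of the two hidden-state trajectories obeys `e(t+1) ≤ λ e(t) + κ M`, where `M`
bounds the input differences, by splitting one step of the recurrence into a change of state
(contracted by `λ`) and a change of input (stretched by at most `κ`). Since `e(0) = 0`, the
fixed point `κ M / (1 - λ)` of `e ↦ λ e + κ M` is never exceeded, and the affine read-out
followed by `σ` multiplies this by at most `‖W_c‖ L`.
-/

lemma le_div_one_sub_of_le_mul_add {u : ℕ → ℝ} {lam c : ℝ} {T : ℕ}
    (hlam0 : 0 ≤ lam) (hlam1 : lam < 1) (h0 : u 0 ≤ c / (1 - lam))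
    (hstep : ∀ t < T, u (t + 1) ≤ lam * u t + c) :
    ∀ t ≤ T, u t ≤ c / (1 - lam) := by
  intro t
  induction t with
  | zero => exact fun _ => h0
  | succ t ih =>
    intro ht
    have hpos : 0 < 1 - lam := by linarith
    calc u (t + 1) ≤ lam * u t + c := hstep t ht
      _ ≤ lam * (c / (1 - lam)) + c := by gcongr; exact ih (Nat.le_of_succ_le ht)
      _ = c / (1 - lam) := by field_simp; ring

section Recurrence

variable {E U : Type*} [SeminormedAddCommGroup E] [SeminormedAddCommGroup U]
  {F : E → U → E} {lam kappa : ℝ}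

lemma norm_map_sub_map_le
    (hstable : ∀ (h h' : E) (u : U), ‖F h u - F h' u‖ ≤ lam * ‖h - h'‖)
    (hlip : ∀ (h : E) (u u' : U), ‖F h u - F h u'‖ ≤ kappa * ‖u - u'‖) (h h' : E) (u u' : U) :
    ‖F h u - F h' u'‖ ≤ lam * ‖h - h'‖ + kappa * ‖u - u'‖ :=
  calc ‖F h u - F h' u'‖ ≤ ‖F h u - F h' u‖ + ‖F h' u - F h' u'‖ :=
        norm_sub_le_norm_sub_add_norm_sub _ _ _
    _ ≤ lam * ‖h - h'‖ + kappa * ‖u - u'‖ := add_le_add (hstable _ _ _) (hlip _ _ _)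

lemma norm_sub_le_of_stable_of_input_lipschitz
    (hlam0 : 0 ≤ lam) (hlam1 : lam < 1) (hkappa : 0 ≤ kappa)
    (hstable : ∀ (h h' : E) (u : U), ‖F h u - F h' u‖ ≤ lam * ‖h - h'‖)
    (hlip : ∀ (h : E) (u u' : U), ‖F h u - F h u'‖ ≤ kappa * ‖u - u'‖)
    {x xt : ℕ → U} {h ht : ℕ → E} (h0 : h 0 = ht 0)
    (hrec : ∀ t, h (t + 1) = F (h t) (x (t + 1)))
    (htrec : ∀ t, ht (t + 1) = F (ht t) (xt (t + 1)))
    {T : ℕ} {M : ℝ} (hM0 : 0 ≤ M) (hM : ∀ s ∈ Finset.Icc 1 T, ‖x s - xt s‖ ≤ M) :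
    ‖h T - ht T‖ ≤ kappa * M / (1 - lam) := by
  refine le_div_one_sub_of_le_mul_add (u := fun t => ‖h t - ht t‖) hlam0 hlam1 ?_ ?_ T le_rfl
  · have : 0 < 1 - lam := by linarith
    simp only [h0, sub_self, norm_zero]
    positivity
  · intro t ht_lt
    have hx : ‖x (t + 1) - xt (t + 1)‖ ≤ M := hM _ (Finset.mem_Icc.mpr ⟨by omega, ht_lt⟩)
    calc ‖h (t + 1) - ht (t + 1)‖
        ≤ lam * ‖h t - ht t‖ + kappa * ‖x (t + 1) - xt (t + 1)‖ := by
          rw [hrec, htrec]; exact norm_map_sub_map_le hstable hlip _ _ _ _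
      _ ≤ lam * ‖h t - ht t‖ + kappa * M := by gcongr

end Recurrence

lemma norm_comp_affine_sub_le {𝕜 E G : Type*} [NontriviallyNormedField 𝕜]
    [SeminormedAddCommGroup E] [SeminormedAddCommGroup G] [NormedSpace 𝕜 E] [NormedSpace 𝕜 G]
    {σ : G → G} {L : ℝ} (hL : 0 ≤ L) (hσ : ∀ q q' : G, ‖σ q - σ q'‖ ≤ L * ‖q - q'‖)
    (W : E →L[𝕜] G) (c : G) (y y' : E) :
    ‖σ (W y + c) - σ (W y' + c)‖ ≤ L * ‖W‖ * ‖y - y'‖ :=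
  calc ‖σ (W y + c) - σ (W y' + c)‖ ≤ L * ‖W y + c - (W y' + c)‖ := hσ _ _
    _ = L * ‖W (y - y')‖ := by rw [add_sub_add_right_eq_sub, map_sub]
    _ ≤ L * (‖W‖ * ‖y - y'‖) := by gcongr; exact W.le_opNorm _
    _ = L * ‖W‖ * ‖y - y'‖ := (mul_assoc _ _ _).symm

/-- With an `L`-Lipschitz output map `σ` composed with the affine layer
`h ↦ W_c·h + b_c` on top of a λ-stable, κ-input-Lipschitz RNN with zero initial states,
`‖p(T;x) − p(T;x̃)‖ ≤ (L·κ·‖W_c‖/(1 − λ))·‖x − x̃‖_ℓ∞`. -/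
theorem stmt_4 {a b m : ℕ}
    (F : EuclideanSpace ℝ (Fin b) → EuclideanSpace ℝ (Fin a) → EuclideanSpace ℝ (Fin b))
    (lam kappa : ℝ) (hlam0 : 0 < lam) (hlam1 : lam < 1) (hkappa : 0 < kappa)
    (hstable : ∀ (h h' : EuclideanSpace ℝ (Fin b)) (u : EuclideanSpace ℝ (Fin a)),
      ‖F h u - F h' u‖ ≤ lam * ‖h - h'‖)
    (hlip : ∀ (h : EuclideanSpace ℝ (Fin b)) (u u' : EuclideanSpace ℝ (Fin a)),
      ‖F h u - F h u'‖ ≤ kappa * ‖u - u'‖)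
    (Wc : EuclideanSpace ℝ (Fin b) →L[ℝ] EuclideanSpace ℝ (Fin m))
    (bc : EuclideanSpace ℝ (Fin m))
    (σ : EuclideanSpace ℝ (Fin m) → EuclideanSpace ℝ (Fin m))
    (L : ℝ) (hL : 0 ≤ L)
    (hσ : ∀ q q' : EuclideanSpace ℝ (Fin m), ‖σ q - σ q'‖ ≤ L * ‖q - q'‖)
    (T : ℕ) (hT : 1 ≤ T)
    (x xt : ℕ → EuclideanSpace ℝ (Fin a))
    (h ht : ℕ → EuclideanSpace ℝ (Fin b))
    (h0 : h 0 = 0) (ht0 : ht 0 = 0)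
    (hrec : ∀ t, h (t + 1) = F (h t) (x (t + 1)))
    (htrec : ∀ t, ht (t + 1) = F (ht t) (xt (t + 1))) :
    ‖σ (Wc (h T) + bc) - σ (Wc (ht T) + bc)‖ ≤ (L * kappa * ‖Wc‖ / (1 - lam)) *
      (Finset.Icc 1 T).sup' (Finset.nonempty_Icc.mpr hT)
        (fun s => ‖x s - xt s‖) := by
  set M := (Finset.Icc 1 T).sup' (Finset.nonempty_Icc.mpr hT) (fun s => ‖x s - xt s‖)
  have hM : ∀ s ∈ Finset.Icc 1 T, ‖x s - xt s‖ ≤ M := fun s hs =>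
    Finset.le_sup' (fun s => ‖x s - xt s‖) hs
  have hM0 : 0 ≤ M := (norm_nonneg _).trans (hM 1 (Finset.mem_Icc.mpr ⟨le_rfl, hT⟩))
  have hstate : ‖h T - ht T‖ ≤ kappa * M / (1 - lam) :=
    norm_sub_le_of_stable_of_input_lipschitz hlam0.le hlam1 hkappa.le hstable hlip
      (h0.trans ht0.symm) hrec htrec hM0 hM
  calc ‖σ (Wc (h T) + bc) - σ (Wc (ht T) + bc)‖ ≤ L * ‖Wc‖ * ‖h T - ht T‖ :=
        norm_comp_affine_sub_le hL hσ Wc bc _ _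
    _ ≤ L * ‖Wc‖ * (kappa * M / (1 - lam)) := by gcongr
    _ = (L * kappa * ‖Wc‖ / (1 - lam)) * M := by ring
end

section
/- Let F : ℝ^b × ℝ^a → ℝ^b be λ-stable with λ ∈ (0,1) and κ-Lipschitz in its input, let W_c be an m × b real matrix with m ≥ 2 and b_c ∈ ℝ^m, and for an input sequence x of length T define the belief vector p(T;x) = softmax(W_c·h(T;x) + b_c), where h(t;x) are the hidden states with zero initial state. Set η = κ·‖W_c‖/(1 − λ). Let S be a nonempty finite set of nominal input sequences of length T such that p(T;x) ∈ V_k for every x ∈ S, and let ε_k = min over x ∈ S and j ≠ k of d(p(T;x), V_j). If a perturbed input sequence x̃ of length T satisfies ‖x − x̃‖_ℓ∞ < ε_k/η for some x ∈ S, then the classification of x̃ is robust for the k'th class, i.e., p(T;x̃) ∈ V_k. -/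
/-! The hidden-state error `e t = ‖h(t;x) - h(t;x̃)‖` satisfies `e (t+1) ≤ λ e t + κ δ`, hence
`e T ≤ κ δ / (1 - λ)`. The Jacobian `diag p - p pᵀ` of softmax has operator norm at most `1` on the
simplex (`‖J v‖²` is at most the variance of `v` under `p`), so softmax is
`1`-Lipschitz and the belief moves by at most `η δ < ε_k`. A belief in the simplex outside `V_k`
has a largest coordinate `j ≠ k` and therefore lies in the closure of `V_j`; by the triangle
inequality for `infDist p (V_j)` this contradicts the choice of `ε_k`. -/

/-- Hidden-state sequence of the RNN `F` driven by input sequence `x`, with zero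
initial state: `h(0;x) = 0` and `h(t;x) = F(h(t−1;x), x(t))`. -/
noncomputable def hstate {a b : ℕ}
    (F : EuclideanSpace ℝ (Fin b) → EuclideanSpace ℝ (Fin a) → EuclideanSpace ℝ (Fin b))
    (x : ℕ → EuclideanSpace ℝ (Fin a)) : ℕ → EuclideanSpace ℝ (Fin b)
  | 0 => 0
  | t + 1 => F (hstate F x t) (x (t + 1))

/-- The softmax map on `ℝ^m`, `softmax(q)_i = exp(q_i)/∑_j exp(q_j)`. -/
noncomputable def softmax {m : ℕ} (q : EuclideanSpace ℝ (Fin m)) : EuclideanSpace ℝ (Fin m) :=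
  (WithLp.equiv 2 (Fin m → ℝ)).symm
    (fun i => Real.exp (q i) / ∑ j : Fin m, Real.exp (q j))

/-- The probability simplex `P_m ⊆ ℝ^m`. -/
def probSimplex (m : ℕ) : Set (EuclideanSpace ℝ (Fin m)) :=
  {p | (∀ i, 0 ≤ p i) ∧ ∑ i, p i = 1}

/-- The Voronoi cell `V_k = {p ∈ P_m | p_k > p_j for all j ≠ k}`. -/
def Vcell {m : ℕ} (k : Fin m) : Set (EuclideanSpace ℝ (Fin m)) :=
  {p | p ∈ probSimplex m ∧ ∀ j, j ≠ k → p j < p k}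

open Finset Filter Topology

theorem sum_sq_mul_sub_sum_mul_le_sum_sq {ι : Type*} [Fintype ι] {p : ι → ℝ} (h0 : ∀ i, 0 ≤ p i)
    (h1 : ∑ i, p i = 1) (v : ι → ℝ) :
    ∑ i, (p i * (v i - ∑ j, p j * v j)) ^ 2 ≤ ∑ i, v i ^ 2 := by
  generalize hs : ∑ j, p j * v j = s
  have hp1 : ∀ i, p i ≤ 1 := fun i => h1 ▸ single_le_sum (fun j _ => h0 j) (mem_univ i)
  have hvar : ∑ i, p i * (v i - s) ^ 2 = ∑ i, p i * v i ^ 2 - s ^ 2 := by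
    simp only [show ∀ i, p i * (v i - s) ^ 2 = p i * v i ^ 2 - 2 * s * (p i * v i) + s ^ 2 * p i
      from fun i => by ring, sum_add_distrib, sum_sub_distrib, ← mul_sum, h1, hs]
    ring
  calc ∑ i, (p i * (v i - s)) ^ 2 ≤ ∑ i, p i * (v i - s) ^ 2 :=
        sum_le_sum fun i _ => by
          rw [mul_pow]
          exact mul_le_mul_of_nonneg_right (by nlinarith [h0 i, hp1 i]) (sq_nonneg _)
    _ ≤ ∑ i, p i * v i ^ 2 := by nlinarith [sq_nonneg s]
    _ ≤ ∑ i, v i ^ 2 := sum_le_sum fun i _ => by nlinarith [h0 i, hp1 i, sq_nonneg (v i)]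

theorem softmax_apply {m : ℕ} (q : EuclideanSpace ℝ (Fin m)) (i : Fin m) :
    softmax q i = Real.exp (q i) / ∑ j, Real.exp (q j) := rfl

theorem sum_exp_pos {m : ℕ} [NeZero m] (q : EuclideanSpace ℝ (Fin m)) :
    0 < ∑ j, Real.exp (q j) :=
  sum_pos (fun _ _ => Real.exp_pos _) univ_nonempty

theorem softmax_mem_probSimplex {m : ℕ} [NeZero m] (q : EuclideanSpace ℝ (Fin m)) :
    softmax q ∈ probSimplex m :=
  ⟨fun i => div_nonneg (Real.exp_pos _).le (sum_exp_pos q).le,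
    by simp only [softmax_apply, ← sum_div, div_self (sum_exp_pos q).ne']⟩

noncomputable def softmaxJacobian {m : ℕ} (p : EuclideanSpace ℝ (Fin m)) :
    EuclideanSpace ℝ (Fin m) →L[ℝ] EuclideanSpace ℝ (Fin m) :=
  LinearMap.toContinuousLinearMap
    { toFun := fun v => WithLp.toLp 2 fun i => p i * (v i - ∑ j, p j * v j)
      map_add' := fun v w => by ext i; simp only [PiLp.add_apply, mul_add, sum_add_distrib]; ring
      map_smul' := fun c v => by
        ext i
        simp only [PiLp.smul_apply, smul_eq_mul, RingHom.id_apply, mul_left_comm _ c, ← mul_sum]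
        ring }

theorem softmaxJacobian_apply {m : ℕ} (p v : EuclideanSpace ℝ (Fin m)) (i : Fin m) :
    softmaxJacobian p v i = p i * (v i - ∑ j, p j * v j) := rfl

theorem norm_softmaxJacobian_le_one {m : ℕ} {p : EuclideanSpace ℝ (Fin m)}
    (hp : p ∈ probSimplex m) : ‖softmaxJacobian p‖ ≤ 1 := by
  refine ContinuousLinearMap.opNorm_le_bound _ zero_le_one fun v => ?_
  simp only [one_mul, EuclideanSpace.norm_eq, Real.norm_eq_abs, sq_abs, softmaxJacobian_apply]
  exact Real.sqrt_le_sqrt (sum_sq_mul_sub_sum_mul_le_sum_sq hp.1 hp.2 v)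

theorem hasFDerivAt_softmax {m : ℕ} [NeZero m] (q : EuclideanSpace ℝ (Fin m)) :
    HasFDerivAt softmax (softmaxJacobian (softmax q)) q := by
  rw [← hasFDerivWithinAt_univ, hasFDerivWithinAt_piLp]
  intro i
  have hexp : ∀ j, HasFDerivAt (fun q : EuclideanSpace ℝ (Fin m) => Real.exp (q j))
      (Real.exp (q j) • PiLp.proj 2 _ j) q := fun j => (PiLp.hasFDerivAt_apply 2 q j).exp
  have hinv := (hasDerivAt_inv (sum_exp_pos q).ne').comp_hasFDerivAt q
    (HasFDerivAt.fun_sum fun j _ => hexp j)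
  refine ((hexp i).mul hinv).hasFDerivWithinAt.congr_fderiv ?_
  ext v
  have hS := (sum_exp_pos q).ne'
  simp only [neg_smul, smul_neg, Function.comp_apply, add_apply, neg_apply, smul_apply,
    _root_.sum_apply, PiLp.proj_apply, smul_eq_mul, ContinuousLinearMap.comp_apply,
    softmaxJacobian_apply, softmax_apply, div_mul_eq_mul_div, ← sum_div]
  field_simp
  ring

theorem lipschitzWith_one_softmax {m : ℕ} [NeZero m] :
    LipschitzWith 1 (softmax : EuclideanSpace ℝ (Fin m) → EuclideanSpace ℝ (Fin m)) := by
  rw [← lipschitzOnWith_univ]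
  exact convex_univ.lipschitzOnWith_of_nnnorm_hasFDerivWithin_le
    (fun q _ => (hasFDerivAt_softmax q).hasFDerivWithinAt)
    (fun q _ => mod_cast norm_softmaxJacobian_le_one (softmax_mem_probSimplex q))

theorem norm_hstate_sub_le {a b : ℕ}
    {F : EuclideanSpace ℝ (Fin b) → EuclideanSpace ℝ (Fin a) → EuclideanSpace ℝ (Fin b)}
    {lam kappa : ℝ} (hlam0 : 0 ≤ lam) (hlam1 : lam < 1) (hkappa : 0 ≤ kappa)
    (hstable : ∀ h h' u, ‖F h u - F h' u‖ ≤ lam * ‖h - h'‖)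
    (hlip : ∀ h u u', ‖F h u - F h u'‖ ≤ kappa * ‖u - u'‖)
    {x xt : ℕ → EuclideanSpace ℝ (Fin a)} {T : ℕ} {D : ℝ} (hD0 : 0 ≤ D)
    (hD : ∀ s ∈ Icc 1 T, ‖x s - xt s‖ ≤ D) :
    ∀ t ≤ T, ‖hstate F x t - hstate F xt t‖ ≤ kappa / (1 - lam) * D := by
  have hl : 0 < 1 - lam := by linarith
  intro t
  induction t with
  | zero =>
    intro _
    simp only [hstate, sub_zero, norm_zero]
    positivity
  | succ t ih =>
    intro ht
    calc ‖hstate F x (t + 1) - hstate F xt (t + 1)‖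
        ≤ ‖F (hstate F x t) (x (t + 1)) - F (hstate F xt t) (x (t + 1))‖
          + ‖F (hstate F xt t) (x (t + 1)) - F (hstate F xt t) (xt (t + 1))‖ :=
          norm_sub_le_norm_sub_add_norm_sub _ _ _
      _ ≤ lam * (kappa / (1 - lam) * D) + kappa * D :=
          add_le_add ((hstable _ _ _).trans (mul_le_mul_of_nonneg_left (ih (by omega)) hlam0))
            ((hlip _ _ _).trans
              (mul_le_mul_of_nonneg_left (hD _ (mem_Icc.2 ⟨by omega, ht⟩)) hkappa))
      _ = kappa / (1 - lam) * D := by field_simp; ring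

-- Moving from `p` towards the vertex `e_j` enters `V_j` at once.
theorem mem_closure_Vcell {m : ℕ} {p : EuclideanSpace ℝ (Fin m)} (hp : p ∈ probSimplex m)
    {j : Fin m} (hmax : ∀ l, p l ≤ p j) : p ∈ closure (Vcell j) := by
  set e : EuclideanSpace ℝ (Fin m) := EuclideanSpace.single j 1
  have hseg : Tendsto (fun θ : ℝ => p + θ • (e - p)) (𝓝[>] 0) (𝓝 p) := by
    have : Continuous (fun θ : ℝ => p + θ • (e - p)) := by fun_prop
    simpa using (this.tendsto 0).mono_left nhdsWithin_le_nhds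
  refine mem_closure_of_tendsto hseg ?_
  filter_upwards [Ioo_mem_nhdsGT one_pos] with θ ⟨hθ0, hθ1⟩
  have he : ∀ l, e l = if l = j then 1 else 0 := fun l => PiLp.single_apply _ _ j 1 l
  have hcoord : ∀ l, (p + θ • (e - p)) l = (1 - θ) * p l + θ * e l := fun l => by
    simp only [PiLp.add_apply, PiLp.smul_apply, PiLp.sub_apply, smul_eq_mul]; ring
  refine ⟨⟨fun l => ?_, ?_⟩, fun l hl => ?_⟩
  · rw [hcoord, he]
    have := hp.1 l
    split_ifs <;> nlinarith
  · simp only [hcoord, sum_add_distrib, ← mul_sum, hp.2, he, sum_ite_eq', mem_univ, if_true]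
    ring
  · rw [hcoord, hcoord, he, he, if_neg hl, if_pos rfl]
    nlinarith [hmax l]

theorem exists_ne_mem_closure_Vcell_of_notMem {m : ℕ} {q : EuclideanSpace ℝ (Fin m)}
    (hq : q ∈ probSimplex m) {k : Fin m} (hqk : q ∉ Vcell k) :
    ∃ j ≠ k, q ∈ closure (Vcell j) := by
  obtain ⟨j₀, hj₀k, hj₀⟩ : ∃ j₀ ≠ k, q k ≤ q j₀ := by
    by_contra! h
    exact hqk ⟨hq, h⟩
  obtain ⟨j, -, hj⟩ := exists_max_image univ (fun l => q l) ⟨k, mem_univ k⟩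
  have hmax : ∀ l, q l ≤ q j := fun l => hj l (mem_univ l)
  by_cases hjk : j = k
  · subst hjk
    exact ⟨j₀, hj₀k, mem_closure_Vcell hq fun l => (hmax l).trans hj₀⟩
  · exact ⟨j, hjk, mem_closure_Vcell hq hmax⟩

theorem mem_Vcell_of_dist_lt_infDist {m : ℕ} {p q : EuclideanSpace ℝ (Fin m)}
    (hq : q ∈ probSimplex m) {k : Fin m}
    (hpq : ∀ j ≠ k, dist p q < Metric.infDist p (Vcell j)) : q ∈ Vcell k := by
  by_contra hqk
  obtain ⟨j, hjk, hj⟩ := exists_ne_mem_closure_Vcell_of_notMem hq hqk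
  have := Metric.infDist_le_infDist_add_dist (x := p) (y := q) (s := Vcell j)
  rw [Metric.infDist_zero_of_mem_closure hj, zero_add] at this
  exact (hpq j hjk).not_ge this

theorem stmt_15_general {a b m : ℕ}
    (F : EuclideanSpace ℝ (Fin b) → EuclideanSpace ℝ (Fin a) → EuclideanSpace ℝ (Fin b))
    (lam kappa : ℝ) (hlam0 : 0 < lam) (hlam1 : lam < 1) (hkappa : 0 < kappa)
    (hstable : ∀ (h h' : EuclideanSpace ℝ (Fin b)) (u : EuclideanSpace ℝ (Fin a)),
      ‖F h u - F h' u‖ ≤ lam * ‖h - h'‖)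
    (hlip : ∀ (h : EuclideanSpace ℝ (Fin b)) (u u' : EuclideanSpace ℝ (Fin a)),
      ‖F h u - F h u'‖ ≤ kappa * ‖u - u'‖)
    (Wc : EuclideanSpace ℝ (Fin b) →L[ℝ] EuclideanSpace ℝ (Fin m))
    (bc : EuclideanSpace ℝ (Fin m))
    (T : ℕ) (hT : 1 ≤ T) (k : Fin m)
    (S : Finset (ℕ → EuclideanSpace ℝ (Fin a)))
    (xt : ℕ → EuclideanSpace ℝ (Fin a))
    (x : ℕ → EuclideanSpace ℝ (Fin a)) (hxS : x ∈ S)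
    (hdev : (Finset.Icc 1 T).sup' (Finset.nonempty_Icc.mpr hT)
        (fun s => ‖x s - xt s‖) <
      (sInf {d : ℝ | ∃ x' ∈ S, ∃ j : Fin m, j ≠ k ∧
          d = Metric.infDist (softmax (Wc (hstate F x' T) + bc)) (Vcell j)}) /
        (kappa * ‖Wc‖ / (1 - lam))) :
    softmax (Wc (hstate F xt T) + bc) ∈ Vcell k := by
  have : NeZero m := ⟨k.pos.ne'⟩
  set D := (Icc 1 T).sup' (nonempty_Icc.mpr hT) fun s => ‖x s - xt s‖
  set ε := sInf {d : ℝ | ∃ x' ∈ S, ∃ j : Fin m, j ≠ k ∧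
    d = Metric.infDist (softmax (Wc (hstate F x' T) + bc)) (Vcell j)}
  have hD : ∀ s ∈ Icc 1 T, ‖x s - xt s‖ ≤ D := fun s hs => le_sup' (fun s => ‖x s - xt s‖) hs
  have hD0 : 0 ≤ D := (norm_nonneg _).trans (hD 1 (left_mem_Icc.mpr hT))
  -- `hdev` rules out `η = 0`, where the division would return the junk value `0`.
  have hη : 0 < kappa * ‖Wc‖ / (1 - lam) := by
    refine lt_of_le_of_ne (div_nonneg (by positivity) (by linarith)) fun h => ?_
    rw [← h, div_zero] at hdev
    exact hdev.not_ge hD0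
  have hstate_close : ‖hstate F x T - hstate F xt T‖ ≤ kappa / (1 - lam) * D :=
    norm_hstate_sub_le hlam0.le hlam1 hkappa.le hstable hlip hD0 hD T le_rfl
  have hbelief : dist (softmax (Wc (hstate F x T) + bc)) (softmax (Wc (hstate F xt T) + bc)) < ε :=
    calc _ ≤ dist (Wc (hstate F x T) + bc) (Wc (hstate F xt T) + bc) := by
          simpa only [NNReal.coe_one, one_mul] using lipschitzWith_one_softmax.dist_le_mul _ _
      _ = ‖Wc (hstate F x T - hstate F xt T)‖ := by rw [dist_add_right, dist_eq_norm, map_sub]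
      _ ≤ ‖Wc‖ * (kappa / (1 - lam) * D) := Wc.le_of_opNorm_le_of_le le_rfl hstate_close
      _ = kappa * ‖Wc‖ / (1 - lam) * D := by ring
      _ < ε := (lt_div_iff₀' hη).mp hdev
  refine mem_Vcell_of_dist_lt_infDist (softmax_mem_probSimplex _) fun j hj => hbelief.trans_le ?_
  exact csInf_le ⟨0, by rintro _ ⟨_, _, _, _, rfl⟩; exact Metric.infDist_nonneg⟩
    ⟨x, hxS, j, hj, rfl⟩

/-- robustness of classification (Theorem 2 of the paper). For the classifier
`p(T;x) = softmax(W_c·h(T;x) + b_c)` built on a λ-stable, κ-input-Lipschitz RNN with zero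
initial states, η = κ·‖W_c‖/(1−λ), a nonempty finite set `S` of nominal sequences whose
beliefs lie in `V_k`, and robustness radius `ε_k = min_{x ∈ S, j ≠ k} d(p(T;x), V_j)`: any
perturbed sequence `x̃` with `‖x − x̃‖_ℓ∞ < ε_k/η` for some `x ∈ S` is classified in `V_k`. -/
theorem stmt_15 {a b m : ℕ} (hm : 2 ≤ m)
    (F : EuclideanSpace ℝ (Fin b) → EuclideanSpace ℝ (Fin a) → EuclideanSpace ℝ (Fin b))
    (lam kappa : ℝ) (hlam0 : 0 < lam) (hlam1 : lam < 1) (hkappa : 0 < kappa)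
    (hstable : ∀ (h h' : EuclideanSpace ℝ (Fin b)) (u : EuclideanSpace ℝ (Fin a)),
      ‖F h u - F h' u‖ ≤ lam * ‖h - h'‖)
    (hlip : ∀ (h : EuclideanSpace ℝ (Fin b)) (u u' : EuclideanSpace ℝ (Fin a)),
      ‖F h u - F h u'‖ ≤ kappa * ‖u - u'‖)
    (Wc : EuclideanSpace ℝ (Fin b) →L[ℝ] EuclideanSpace ℝ (Fin m))
    (bc : EuclideanSpace ℝ (Fin m))
    (T : ℕ) (hT : 1 ≤ T) (k : Fin m)
    (S : Finset (ℕ → EuclideanSpace ℝ (Fin a))) (hS : S.Nonempty)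
    (hSV : ∀ x ∈ S, softmax (Wc (hstate F x T) + bc) ∈ Vcell k)
    (xt : ℕ → EuclideanSpace ℝ (Fin a))
    (x : ℕ → EuclideanSpace ℝ (Fin a)) (hxS : x ∈ S)
    (hdev : (Finset.Icc 1 T).sup' (Finset.nonempty_Icc.mpr hT)
        (fun s => ‖x s - xt s‖) <
      (sInf {d : ℝ | ∃ x' ∈ S, ∃ j : Fin m, j ≠ k ∧
          d = Metric.infDist (softmax (Wc (hstate F x' T) + bc)) (Vcell j)}) /
        (kappa * ‖Wc‖ / (1 - lam))) :
    softmax (Wc (hstate F xt T) + bc) ∈ Vcell k :=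
  stmt_15_general F lam kappa hlam0 hlam1 hkappa hstable hlip Wc bc T hT k S xt x hxS hdev
end
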